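/- arXiv:math/0303262 — 3 statements merged into one kernel-verified Lean document; each statement's English description precedes it below -/
import Mathlib

section
/- Let Γ be the subgroup of SU(2) generated by a = !![ζ, 0; 0, conj ζ] (where ζ = exp(πi/3)) and b = !![0, i; i, 0]. Then Γ has exactly 12 elements. -/
open Matrix

/-- The special unitary group is a group (inverse given by conjugate transpose). -/
noncomputable instance specialUnitaryGroup.instGroup (n : Type*) [DecidableEq n] [Fintype n] :
    Group (Matrix.specialUnitaryGroup n ℂ) where
  inv A := ⟨star A.1, by
    obtain ⟨hu, hd⟩ := (Matrix.mem_specialUnitaryGroup_iff).mp A.2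
    refine (Matrix.mem_specialUnitaryGroup_iff).mpr ⟨Unitary.star_mem hu, ?_⟩
    rw [Matrix.star_eq_conjTranspose, Matrix.det_conjTranspose, hd]
    simp⟩
  inv_mul_cancel A := by
    ext1
    exact ((Matrix.mem_specialUnitaryGroup_iff).mp A.2).1.1

/-- ζ = exp(πi/3) -/
noncomputable def zeta : ℂ := Complex.exp ((Real.pi : ℂ) * Complex.I / 3)

/-- The matrix a = !![ζ, 0; 0, conj ζ]. -/
noncomputable def aMat : Matrix (Fin 2) (Fin 2) ℂ := !![zeta, 0; 0, (starRingEnd ℂ) zeta]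

/-- The matrix b = !![0, i; i, 0]. -/
def bMat : Matrix (Fin 2) (Fin 2) ℂ := !![0, Complex.I; Complex.I, 0]

lemma zeta_prim : IsPrimitiveRoot zeta 6 := by
  have h := Complex.isPrimitiveRoot_exp 6 (by norm_num)
  have : zeta = Complex.exp (2 * (Real.pi : ℂ) * Complex.I / 6) := by
    unfold zeta; congr 1; ring
  rwa [this]

lemma zeta_mul_conj : zeta * (starRingEnd ℂ) zeta = 1 := by
  unfold zeta
  rw [← Complex.exp_conj, ← Complex.exp_add]
  have : (starRingEnd ℂ) ((Real.pi : ℂ) * Complex.I / 3) = -((Real.pi : ℂ) * Complex.I / 3) := by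
    simp [map_div₀, Complex.conj_I, Complex.conj_ofReal, map_ofNat]
    ring
  rw [this, add_neg_cancel, Complex.exp_zero]

lemma conj_zeta_mul : (starRingEnd ℂ) zeta * zeta = 1 := by
  rw [mul_comm]; exact zeta_mul_conj

lemma zeta_pow_three : zeta ^ 3 = -1 := by
  unfold zeta
  rw [← Complex.exp_nat_mul]
  have : ((3 : ℕ) : ℂ) * ((Real.pi : ℂ) * Complex.I / 3) = (Real.pi : ℂ) * Complex.I := by
    push_cast; ring
  rw [this, Complex.exp_pi_mul_I]

lemma conj_zeta_pow_three : ((starRingEnd ℂ) zeta) ^ 3 = -1 := by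
  rw [← map_pow, zeta_pow_three]; simp

lemma ha_mem : aMat ∈ Matrix.specialUnitaryGroup (Fin 2) ℂ := by
  rw [Matrix.mem_specialUnitaryGroup_iff]
  constructor
  · rw [Matrix.mem_unitaryGroup_iff]
    ext i j
    fin_cases i <;> fin_cases j <;>
      simp [aMat, Matrix.mul_apply, Fin.sum_univ_two, Matrix.star_apply, Matrix.one_apply,
        Complex.star_def, zeta_mul_conj, conj_zeta_mul]
  · simp [aMat, Matrix.det_fin_two_of, zeta_mul_conj]

lemma hb_mem : bMat ∈ Matrix.specialUnitaryGroup (Fin 2) ℂ := by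
  rw [Matrix.mem_specialUnitaryGroup_iff]
  constructor
  · rw [Matrix.mem_unitaryGroup_iff]
    ext i j
    fin_cases i <;> fin_cases j <;>
      simp [bMat, Matrix.mul_apply, Fin.sum_univ_two, Matrix.star_apply, Matrix.one_apply,
        Complex.star_def, Complex.I_mul_I]
  · simp [bMat, Matrix.det_fin_two_of]

lemma aMat_pow (k : ℕ) : aMat ^ k = !![zeta ^ k, 0; 0, ((starRingEnd ℂ) zeta) ^ k] := by
  induction k with
  | zero => simp [Matrix.one_fin_two]
  | succ n ih => rw [pow_succ, ih, aMat, Matrix.mul_fin_two]; ring_nf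

/-- The subgroup Γ of SU(2) generated by a and b has exactly 12 elements. -/
theorem stmt1 :
    ∃ (ha : aMat ∈ Matrix.specialUnitaryGroup (Fin 2) ℂ)
      (hb : bMat ∈ Matrix.specialUnitaryGroup (Fin 2) ℂ),
      Nat.card (Subgroup.closure
        ({⟨aMat, ha⟩, ⟨bMat, hb⟩} : Set (Matrix.specialUnitaryGroup (Fin 2) ℂ))) = 12 := by
  refine ⟨ha_mem, hb_mem, ?_⟩
  set SU2 := Matrix.specialUnitaryGroup (Fin 2) ℂ
  set A : SU2 := ⟨aMat, ha_mem⟩ with hA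
  set B : SU2 := ⟨bMat, hb_mem⟩ with hB
  -- basic relations
  have coe_pow : ∀ k : ℕ, ((A ^ k : SU2) : Matrix (Fin 2) (Fin 2) ℂ) = aMat ^ k := by
    intro k
    induction k with
    | zero => rfl
    | succ n ih => rw [pow_succ, pow_succ, ← ih]; rfl
  have hA6 : A ^ 6 = 1 := by
    apply Subtype.ext
    rw [coe_pow, aMat_pow]
    have h1 : zeta ^ 6 = 1 := zeta_prim.pow_eq_one
    have h2 : ((starRingEnd ℂ) zeta) ^ 6 = 1 := by rw [← map_pow, h1]; simp
    rw [h1, h2, ← Matrix.one_fin_two]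
    rfl
  have hA_one : ∀ k : ℕ, A ^ k = 1 → 6 ∣ k := by
    intro k hk
    have : aMat ^ k = 1 := by rw [← coe_pow, hk]; rfl
    rw [aMat_pow, Matrix.one_fin_two] at this
    have h00 : zeta ^ k = 1 := by
      have := congrFun (congrFun this 0) 0
      simpa using this
    exact (zeta_prim.pow_eq_one_iff_dvd k).mp h00
  have hBB : B * B = A ^ 3 := by
    apply Subtype.ext
    show bMat * bMat = _
    rw [coe_pow, aMat_pow, zeta_pow_three, conj_zeta_pow_three, bMat, Matrix.mul_fin_two]
    norm_num [Complex.I_mul_I]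
  have hABBA : A * B = B * A⁻¹ := by
    apply Subtype.ext
    show aMat * bMat = bMat * star aMat
    rw [Matrix.star_eq_conjTranspose, aMat, bMat]
    rw [show (!![zeta, 0; 0, (starRingEnd ℂ) zeta])ᴴ
        = !![(starRingEnd ℂ) zeta, 0; 0, zeta] by
      ext i j; fin_cases i <;> fin_cases j <;> simp [Matrix.conjTranspose_apply]]
    rw [Matrix.mul_fin_two, Matrix.mul_fin_two]
    ring_nf
  have hpowB : ∀ k : ℕ, A ^ k * B = B * (A ^ k)⁻¹ := by
    intro k
    induction k with
    | zero => simp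
    | succ n ih =>
      rw [pow_succ, mul_assoc, hABBA, ← mul_assoc, ih, mul_assoc, ← _root_.mul_inv_rev, pow_mul_comm']
  -- the map from the quaternion group
  have hmod : ∀ m : ℕ, A ^ (m % (2 * 3)) = A ^ m := by
    intro m
    conv_rhs => rw [← Nat.div_add_mod m (2 * 3)]
    rw [pow_add, pow_mul]
    norm_num [hA6]
  set p : ZMod (2 * 3) → SU2 := fun i => A ^ i.val with hp
  have p_add : ∀ i j, p (i + j) = p i * p j := by
    intro i j
    show A ^ (i + j).val = A ^ i.val * A ^ j.val
    rw [← pow_add, ZMod.val_add, hmod]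
  have p_zero : p 0 = 1 := by
    show A ^ (0 : ZMod (2 * 3)).val = 1
    rw [ZMod.val_zero, pow_zero]
  have p_neg : ∀ i, p (-i) = (p i)⁻¹ := by
    intro i
    have := p_add (-i) i
    rw [neg_add_cancel, p_zero] at this
    exact eq_inv_of_mul_eq_one_left this.symm
  have pB : ∀ i, p i * B = B * p (-i) := by
    intro i
    rw [p_neg, hp]
    exact hpowB i.val
  set f : QuaternionGroup 3 → SU2 := fun g =>
    match g with
    | QuaternionGroup.a i => p i
    | QuaternionGroup.xa i => B * p i
    with hf
  have f_mul : ∀ g h, f (g * h) = f g * f h := by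
    rintro (i | i) (j | j)
    · rw [QuaternionGroup.a_mul_a]
      exact p_add i j
    · rw [QuaternionGroup.a_mul_xa]
      show B * p (j - i) = p i * (B * p j)
      rw [← mul_assoc, pB, mul_assoc, ← p_add]
      congr 1
      ring
    · rw [QuaternionGroup.xa_mul_a]
      show B * p (i + j) = (B * p i) * p j
      rw [mul_assoc, p_add]
    · rw [QuaternionGroup.xa_mul_xa]
      show p ((3 : ℕ) + j - i) = (B * p i) * (B * p j)
      have hv3 : (((3 : ℕ) : ZMod (2 * 3))).val = 3 := by decide
      have h3 : p ((3 : ℕ) : ZMod (2 * 3)) = A ^ 3 := by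
        show A ^ (((3 : ℕ) : ZMod (2 * 3)).val) = A ^ 3
        rw [hv3]
      calc p ((3 : ℕ) + j - i) = p ((3 : ℕ)) * (p (-i) * p j) := by
            rw [← p_add, ← p_add]; congr 1; ring
        _ = (B * p i) * (B * p j) := by
            rw [h3, ← hBB, p_neg]
            calc B * B * ((p i)⁻¹ * p j) = B * (B * (p i)⁻¹) * p j := by group
              _ = B * (p i * B) * p j := by rw [← p_neg, ← pB]
              _ = (B * p i) * (B * p j) := by group
  set φ : QuaternionGroup 3 →* SU2 := MonoidHom.mk' f f_mul with hφ
  have hrange : Subgroup.closure ({A, B} : Set SU2) = φ.range := by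
    apply le_antisymm
    · rw [Subgroup.closure_le]
      rintro x (rfl | rfl)
      · refine ⟨QuaternionGroup.a 1, ?_⟩
        show A ^ (1 : ZMod (2 * 3)).val = A
        have : (1 : ZMod (2 * 3)).val = 1 := by decide
        rw [this, pow_one]
      · exact ⟨QuaternionGroup.xa 0, by show B * p 0 = B; rw [p_zero, mul_one]⟩
    · rintro x ⟨g, rfl⟩
      have hAc : A ∈ Subgroup.closure ({A, B} : Set SU2) :=
        Subgroup.subset_closure (Set.mem_insert _ _)
      have hBc : B ∈ Subgroup.closure ({A, B} : Set SU2) :=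
        Subgroup.subset_closure (Set.mem_insert_of_mem _ rfl)
      cases g with
      | a i => exact pow_mem hAc _
      | xa i => exact mul_mem hBc (pow_mem hAc _)
  have finj : Function.Injective φ := by
    rw [injective_iff_map_eq_one]
    rintro (i | i) h
    · have h' : A ^ i.val = 1 := h
      have hdvd := hA_one _ h'
      have hlt : i.val < 2 * 3 := ZMod.val_lt i
      have h0 : i.val = 0 := by
        rcases hdvd with ⟨c, hc⟩
        omega
      have hi0 : i = 0 := (ZMod.val_eq_zero i).mp h0
      rw [hi0]
      exact QuaternionGroup.one_def.symm
    · exfalso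
      have h' : bMat * aMat ^ i.val = 1 := by
        have h2 : (B * p i : SU2) = 1 := h
        have h3 : ((B * p i : SU2) : Matrix (Fin 2) (Fin 2) ℂ) = bMat * aMat ^ i.val := by
          rw [← coe_pow]; rfl
        rw [h2] at h3
        exact h3.symm
      have := congrFun (congrFun h' 0) 0
      rw [aMat_pow] at this
      simp [bMat, Matrix.mul_fin_two, Matrix.one_fin_two] at this
  rw [hrange]
  have hc : Nat.card φ.range = Nat.card (QuaternionGroup 3) :=
    Nat.card_congr (MonoidHom.ofInjective finj).toEquiv.symm
  rw [hc, Nat.card_eq_fintype_card, QuaternionGroup.card]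
end

section
/- Let α, β ∈ ℂ with |α|² + |β|² = 1. Then there exists λ ∈ ℂ such that (α·x - conj(β)·y)^3 + (β·x + conj(α)·y)^3 = λ·(x^3 + y^3) for all x, y ∈ ℂ if and only if either (β = 0 and α^6 = 1) or (α = 0 and β^6 = -1). -/
/-- The substitution (x,y) ↦ (αx - conj β y, βx + conj α y) attached to an element
of SU(2) scales the binary cubic x³ + y³ iff (β = 0 and α⁶ = 1) or (α = 0 and β⁶ = -1). -/
theorem stmt7 (α β : ℂ) (h : ‖α‖ ^ 2 + ‖β‖ ^ 2 = 1) :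
    (∃ l : ℂ, ∀ x y : ℂ,
        (α * x - (starRingEnd ℂ) β * y) ^ 3 + (β * x + (starRingEnd ℂ) α * y) ^ 3
          = l * (x ^ 3 + y ^ 3)) ↔
      (β = 0 ∧ α ^ 6 = 1) ∨ (α = 0 ∧ β ^ 6 = -1) := by
  have hc : α * (starRingEnd ℂ) α + β * (starRingEnd ℂ) β = 1 := by
    have h' : Complex.normSq α + Complex.normSq β = 1 := by
      rw [← Complex.sq_norm, ← Complex.sq_norm]; exact h
    rw [Complex.mul_conj, Complex.mul_conj]
    exact_mod_cast h'
  constructor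
  · rintro ⟨l, hl⟩
    have h10 := hl 1 0
    have h01 := hl 0 1
    have h11 := hl 1 1
    have h1m1 := hl 1 (-1)
    have key : (starRingEnd ℂ) α * β = 0 := by
      linear_combination (α/6 + (starRingEnd ℂ) β/6) * h11 + (α/6 - (starRingEnd ℂ) β/6) * h1m1
        - (α/3) * h10 - ((starRingEnd ℂ) β/3) * h01 - ((starRingEnd ℂ) α * β) * hc
    rcases mul_eq_zero.mp key with hA | hB
    · have ha : α = 0 := by
        have := congrArg (starRingEnd ℂ) hA
        simpa using this
      subst ha
      right
      refine ⟨rfl, ?_⟩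
      simp only [map_zero] at h10 h01 hc
      linear_combination (β^3) * h10 - (β^3) * h01
        - ((β * (starRingEnd ℂ) β)^2 + β * (starRingEnd ℂ) β + 1) * hc
    · subst hB
      left
      refine ⟨rfl, ?_⟩
      simp only [map_zero] at h10 h01 hc
      linear_combination (α^3) * h10 - (α^3) * h01
        + ((α * (starRingEnd ℂ) α)^2 + α * (starRingEnd ℂ) α + 1) * hc
  · rintro (⟨hb, ha6⟩ | ⟨ha, hb6⟩)
    · subst hb
      simp only [map_zero, add_zero] at hc ⊢
      refine ⟨α ^ 3, fun x y => ?_⟩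
      have hca : (starRingEnd ℂ) α ^ 3 = α ^ 3 := by
        linear_combination (-(starRingEnd ℂ) α^3) * ha6
          + α^3 * ((α * (starRingEnd ℂ) α)^2 + α * (starRingEnd ℂ) α + 1) * hc
      linear_combination y^3 * hca
    · subst ha
      simp only [map_zero, zero_add] at hc ⊢
      refine ⟨β ^ 3, fun x y => ?_⟩
      have hcb : (starRingEnd ℂ) β ^ 3 = -β ^ 3 := by
        linear_combination ((starRingEnd ℂ) β^3) * hb6
          - β^3 * ((β * (starRingEnd ℂ) β)^2 + β * (starRingEnd ℂ) β + 1) * hc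
      linear_combination (-y^3) * hcb
end

section
/- Let V be the real linear span in Matrix (Fin 2) (Fin 2) ℂ of the four matrices !![1,0;0,-1], !![i,0;0,i], !![0,1;1,0], !![0,i;-i,0]. Then every nonzero matrix M ∈ V can be written as M = λ • A for some nonzero λ ∈ ℂ and some A ∈ SU(2). (Together with the previous inclusion, this identifies the SU(2)-orbit SU(2)/ℤ₂ of [I] in ℂP³ with the projective space ℝP³ = P(V) of the real 4-dimensional space V.) -/
open Matrix

/-- The real span V of the four matrices !![1,0;0,-1], !![i,0;0,i], !![0,1;1,0],
!![0,i;-i,0]. -/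
noncomputable def V : Submodule ℝ (Matrix (Fin 2) (Fin 2) ℂ) :=
  Submodule.span ℝ
    ({!![1, 0; 0, -1], !![Complex.I, 0; 0, Complex.I],
      !![0, 1; 1, 0], !![0, Complex.I; -Complex.I, 0]} : Set (Matrix (Fin 2) (Fin 2) ℂ))

/-- Every nonzero matrix in V is a nonzero complex scalar multiple of a special
unitary matrix. -/
theorem stmt14 (M : Matrix (Fin 2) (Fin 2) ℂ) (hM : M ∈ V) (hM0 : M ≠ 0) :
    ∃ (l : ℂ) (A : Matrix.specialUnitaryGroup (Fin 2) ℂ),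
      l ≠ 0 ∧ M = l • (A : Matrix (Fin 2) (Fin 2) ℂ) := by
  -- Step 1: M satisfies the quaternion-form relations
  have hW : M 1 0 = (starRingEnd ℂ) (M 0 1) ∧ M 1 1 = -(starRingEnd ℂ) (M 0 0) := by
    let W : Submodule ℝ (Matrix (Fin 2) (Fin 2) ℂ) :=
      { carrier := {N | N 1 0 = (starRingEnd ℂ) (N 0 1) ∧ N 1 1 = -(starRingEnd ℂ) (N 0 0)}
        add_mem' := by
          rintro a b ⟨h1, h2⟩ ⟨h3, h4⟩
          constructor <;> simp [Matrix.add_apply, map_add, h1, h2, h3, h4] <;> ring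
        zero_mem' := by simp
        smul_mem' := by
          rintro c N ⟨h1, h2⟩
          constructor <;>
            simp [Matrix.smul_apply, Complex.real_smul, _root_.map_mul, Complex.conj_ofReal,
              h1, h2] <;> ring }
    have hle : V ≤ W := by
      rw [V, Submodule.span_le]
      rintro N hN
      simp only [Set.mem_insert_iff, Set.mem_singleton_iff] at hN
      rcases hN with rfl | rfl | rfl | rfl <;>
        constructor <;>
          simp [Matrix.cons_val_zero, Matrix.cons_val_one, Matrix.head_cons]
    exact hle hM
  obtain ⟨h10, h11⟩ := hW
  set a := M 0 0 with ha
  set b := M 0 1 with hb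
  set s : ℝ := Complex.normSq a + Complex.normSq b with hs
  have hs0 : 0 < s := by
    rcases lt_or_eq_of_le (add_nonneg (Complex.normSq_nonneg a) (Complex.normSq_nonneg b)) with h | h
    · exact h
    · exfalso
      have ha0 : a = 0 := Complex.normSq_eq_zero.mp (le_antisymm
        (by nlinarith [Complex.normSq_nonneg b]) (Complex.normSq_nonneg a))
      have hb0 : b = 0 := Complex.normSq_eq_zero.mp (le_antisymm
        (by nlinarith [Complex.normSq_nonneg a]) (Complex.normSq_nonneg b))
      apply hM0
      ext i j
      fin_cases i <;> fin_cases j <;>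
        simp [← ha, ← hb, h10, h11, ha0, hb0]
  have hsne : (s : ℂ) ≠ 0 := by
    exact_mod_cast ne_of_gt hs0
  set r : ℝ := Real.sqrt s with hr
  have hr0 : 0 < r := Real.sqrt_pos.mpr hs0
  have hr2 : (r : ℂ) * (r : ℂ) = (s : ℂ) := by
    norm_cast
    rw [hr]
    exact Real.mul_self_sqrt hs0.le
  set l : ℂ := Complex.I * (r : ℂ) with hl
  have hl0 : l ≠ 0 := by
    simp [hl, Complex.I_ne_zero, Complex.ofReal_ne_zero, ne_of_gt hr0]
  have hconjl : (starRingEnd ℂ) l = -l := by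
    rw [hl]
    simp [Complex.conj_ofReal]
  have hll : (starRingEnd ℂ) l * l = (s : ℂ) := by
    rw [hconjl, hl]
    have h1 : -(Complex.I * (r : ℂ)) * (Complex.I * (r : ℂ))
        = -(Complex.I * Complex.I) * ((r : ℂ) * (r : ℂ)) := by ring
    rw [h1, Complex.I_mul_I, hr2]
    ring
  have hl2 : l ^ 2 = -(s : ℂ) := by
    rw [hl]
    have h1 : (Complex.I * (r : ℂ)) ^ 2 = (Complex.I * Complex.I) * ((r : ℂ) * (r : ℂ)) := by
      ring
    rw [h1, Complex.I_mul_I, hr2]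
    ring
  set A : Matrix (Fin 2) (Fin 2) ℂ := l⁻¹ • M with hA
  have key : M = l • A := by
    rw [hA, smul_smul, mul_inv_cancel₀ hl0, one_smul]
  have hdetM : M.det = -(s : ℂ) := by
    rw [Matrix.det_fin_two, ← ha, ← hb, h10, h11]
    simp [Complex.mul_conj, ← ha, ← hb, hs]
    ring
  have hAmem : A ∈ Matrix.specialUnitaryGroup (Fin 2) ℂ := by
    rw [Matrix.mem_specialUnitaryGroup_iff]
    constructor
    · rw [Matrix.mem_unitaryGroup_iff']
      have hMM : star M * M = (s : ℂ) • (1 : Matrix (Fin 2) (Fin 2) ℂ) := by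
        ext i j
        fin_cases i <;> fin_cases j <;>
          simp [Matrix.mul_apply, Fin.sum_univ_two, Matrix.star_apply,
            ← ha, ← hb, h10, h11, Matrix.one_apply, ← Complex.normSq_eq_conj_mul_self, hs]
        all_goals push_cast
        all_goals ring
      rw [hA, star_smul, Matrix.smul_mul, Matrix.mul_smul, smul_smul, hMM, smul_smul]
      have hlsl : (starRingEnd ℂ) l * l ≠ 0 := by
        rw [hll]; exact hsne
      have hone : star l⁻¹ * l⁻¹ * (s : ℂ) = 1 := by
        have h1 : star l⁻¹ = ((starRingEnd ℂ) l)⁻¹ := star_inv₀ l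
        rw [h1, ← mul_inv, hll]
        exact inv_mul_cancel₀ hsne
      rw [hone, one_smul]
    · rw [hA, Matrix.det_smul, hdetM, Fintype.card_fin, inv_pow, hl2]
      exact inv_mul_cancel₀ (neg_ne_zero.mpr hsne)
  exact ⟨l, ⟨A, hAmem⟩, hl0, key⟩
end
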